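/- Assume α₄ is rational. Then there exist a constant K > 0 and x₀ (depending on α₄) such that for all x ≥ x₀ and every prime p with x/2 < p ≤ x, one has ‖σ₄(p+1)/(p(p+1)) + σ₄(p+2)/(p(p+1)(p+2)) + σ₄(p+3)/(p(p+1)(p+2)(p+3))‖ ≤ K/x. -/

import Mathlib

/-- `σ₄(n)`, the sum of the fourth powers of the divisors of `n`. -/
def sigma4 (n : ℕ) : ℕ := ∑ d ∈ n.divisors, d ^ 4

/-- `α₄ = ∑_{n ≥ 1} σ₄(n)/n!`. -/
noncomputable def alpha4 : ℝ := ∑' n : ℕ, (sigma4 (n + 1) : ℝ) / (Nat.factorial (n + 1) : ℝ)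

/-- The distance from a real number to the nearest integer. -/
noncomputable def distToInt (θ : ℝ) : ℝ := |θ - round θ|

/-!
If `α₄ = a / b` and `p > b` is prime, then `(p - 1)! α₄` is an integer. Splitting the series at
`n = p`: the terms `n < p` contribute an integer, the term `n = p` contributes
`σ₄(p) / p = p³ + 1 / p`, the terms `n = p + 1, p + 2, p + 3` are exactly the three-term sum, and
since `σ₄(n) = O(n⁴)` the remaining tail is `O(1 / p)`. So the three-term sum lies within
`O(1 / p)` of an integer.
-/

open Nat Finset

theorem add_pow_mul_factorial_le (j r : ℕ) : (j + r) ^ r * j ! ≤ r ^ r * (j + r)! := by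
  have hbase : (j + r) ^ r ≤ r ^ r * (j + 1) ^ r := by
    rcases r.eq_zero_or_pos with rfl | hr
    · simp
    rw [← mul_pow]
    exact Nat.pow_le_pow_left (by nlinarith) r
  calc (j + r) ^ r * j ! ≤ r ^ r * (j + 1).ascFactorial r * j ! := by
        gcongr
        exact hbase.trans (Nat.mul_le_mul_left _ (Nat.pow_succ_le_ascFactorial _ _))
    _ = r ^ r * (j + r)! := by rw [← factorial_mul_ascFactorial]; ring

section FactorialSeries

variable {a : ℕ → ℝ} {C : ℝ} {r : ℕ}

theorem div_factorial_add_le (ha : ∀ n, a n ≤ C * n ^ r) (hC : 0 ≤ C) (j : ℕ) :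
    a (j + r) / (j + r)! ≤ C * r ^ r / j ! := by
  have key : ((j + r : ℕ) : ℝ) ^ r * j ! ≤ r ^ r * (j + r)! := by
    exact_mod_cast add_pow_mul_factorial_le j r
  rw [div_le_div_iff₀ (by positivity) (by positivity)]
  calc a (j + r) * j ! ≤ C * ((j + r : ℕ) : ℝ) ^ r * j ! := by gcongr; exact ha _
    _ ≤ C * r ^ r * (j + r)! := by rw [mul_assoc, mul_assoc]; gcongr

theorem summable_div_factorial_of_le_mul_pow (ha0 : ∀ n, 0 ≤ a n) (ha : ∀ n, a n ≤ C * n ^ r)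
    (hC : 0 ≤ C) : Summable fun n => a n / n ! := by
  have hexp : Summable fun j : ℕ => C * r ^ r / j ! := by
    simpa [div_eq_mul_inv] using (Real.summable_pow_div_factorial 1).mul_left (C * r ^ r)
  refine (summable_nat_add_iff r).1 <|
    hexp.of_nonneg_of_le (fun j => div_nonneg (ha0 _) (by positivity)) (div_factorial_add_le ha hC)

theorem factorial_div_factorial_add_le (m k : ℕ) : (m ! : ℝ) / (m + k)! ≤ (1 / (m + 1)) ^ k := by
  have h : (m ! : ℝ) * (m + 1) ^ k ≤ (m + k)! := by exact_mod_cast factorial_mul_pow_le_factorial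
  rw [div_le_iff₀ (by positivity), one_div_pow, div_mul_eq_mul_div, le_div_iff₀ (by positivity)]
  linarith

theorem tsum_factorial_mul_tail_le (ha0 : ∀ n, 0 ≤ a n) (ha : ∀ n, a n ≤ C * n ^ r)
    (hC : 0 ≤ C) {m : ℕ} (hm : 0 < m) :
    ∑' k, (m ! : ℝ) * (a (k + r + (m + 1)) / (k + r + (m + 1))!) ≤ C * r ^ r / m := by
  set ρ : ℝ := 1 / (m + 1)
  have hρ : ρ < 1 := by
    rw [div_lt_one (by positivity)]; exact_mod_cast Nat.succ_lt_succ hm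
  have hterm (k : ℕ) : (m ! : ℝ) * (a (k + r + (m + 1)) / (k + r + (m + 1))!) ≤
      C * r ^ r * ρ * ρ ^ k := by
    have h := div_factorial_add_le ha hC (k + (m + 1))
    rw [show k + (m + 1) + r = k + r + (m + 1) by ring] at h
    calc (m ! : ℝ) * (a (k + r + (m + 1)) / (k + r + (m + 1))!)
        ≤ m ! * (C * r ^ r / (k + (m + 1))!) := by gcongr
      _ = C * r ^ r * (m ! / (m + (k + 1))!) := by
        rw [show k + (m + 1) = m + (k + 1) by ring]; ring
      _ ≤ C * r ^ r * ρ * ρ ^ k := by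
        rw [mul_assoc _ ρ, ← _root_.pow_succ']
        gcongr
        exact factorial_div_factorial_add_le m (k + 1)
  have hgeom : Summable fun k : ℕ => C * r ^ r * ρ * ρ ^ k :=
    (summable_geometric_of_lt_one (by positivity) hρ).mul_left _
  have hsum : Summable fun k => (m ! : ℝ) * (a (k + r + (m + 1)) / (k + r + (m + 1))!) := by
    refine (((summable_nat_add_iff (r + (m + 1))).2
      (summable_div_factorial_of_le_mul_pow ha0 ha hC)).mul_left (m ! : ℝ)).congr fun k => ?_
    simp only [add_assoc]
  calc _ ≤ ∑' k : ℕ, C * r ^ r * ρ * ρ ^ k := hsum.tsum_le_tsum hterm hgeom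
    _ = C * r ^ r / m := by
      rw [tsum_mul_left, tsum_geometric_of_lt_one (by positivity) hρ]
      have : (m : ℝ) ≠ 0 := by positivity
      simp only [ρ]; field_simp; rw [add_sub_cancel_right, mul_div_cancel_right₀ _ this]

end FactorialSeries

theorem exists_int_factorial_mul_tail_eq {a : ℕ → ℤ} (hs : Summable fun n => (a n : ℝ) / n !)
    {q : ℚ} (hq : ∑' n, (a n : ℝ) / n ! = q) {m : ℕ} (hm : q.den ≤ m) :
    ∃ z : ℤ, ∑' k, (m ! : ℝ) * (a (k + (m + 1)) / (k + (m + 1))!) = z := by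
  have hhead : (m ! : ℝ) * ∑ n ∈ range (m + 1), (a n : ℝ) / n ! =
      ((∑ n ∈ range (m + 1), a n * (m ! / n ! : ℕ) : ℤ) : ℝ) := by
    simp only [Int.cast_sum, Int.cast_mul, Int.cast_natCast, mul_sum]
    refine sum_congr rfl fun n hn => ?_
    rw [Nat.cast_div (factorial_dvd_factorial (mem_range_succ_iff.1 hn)) (by positivity)]
    ring
  have hrat : (m ! : ℝ) * q = ((m ! / q.den : ℕ) * q.num : ℤ) := by
    simp only [Int.cast_mul, Int.cast_natCast]
    rw [Nat.cast_div (dvd_factorial q.pos hm) (by positivity), Rat.cast_def]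
    ring
  refine ⟨(m ! / q.den : ℕ) * q.num - ∑ n ∈ range (m + 1), a n * (m ! / n ! : ℕ), ?_⟩
  rw [tsum_mul_left, Int.cast_sub, ← hrat, ← hhead, ← hq, ← hs.sum_add_tsum_nat_add (m + 1)]
  ring

theorem sigma4_le_tsum_mul_pow (n : ℕ) :
    (sigma4 n : ℝ) ≤ (∑' d : ℕ, 1 / (d : ℝ) ^ 4) * n ^ 4 := by
  have hdiv : (sigma4 n : ℝ) = (∑ d ∈ n.divisors, 1 / (d : ℝ) ^ 4) * n ^ 4 := by
    rw [sigma4, ← Nat.sum_div_divisors, sum_mul]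
    push_cast
    refine sum_congr rfl fun d hd => ?_
    have hd0 : (d : ℝ) ≠ 0 := by exact_mod_cast (pos_of_mem_divisors hd).ne'
    rw [Nat.cast_div (dvd_of_mem_divisors hd) hd0]
    field_simp
  rw [hdiv]
  gcongr
  exact (Real.summable_one_div_nat_pow.2 (by norm_num)).sum_le_tsum _ fun _ _ => by positivity

theorem sigma4_prime {p : ℕ} (hp : p.Prime) : sigma4 p = p ^ 4 + 1 := by
  simp [sigma4, hp.sum_divisors]

theorem summable_sigma4_div_factorial : Summable fun n => (sigma4 n : ℝ) / n ! :=
  summable_div_factorial_of_le_mul_pow (fun _ => by positivity) sigma4_le_tsum_mul_pow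
    (tsum_nonneg fun _ => by positivity)

theorem alpha4_eq_tsum : alpha4 = ∑' n, (sigma4 n : ℝ) / n ! := by
  rw [summable_sigma4_div_factorial.tsum_eq_zero_add, alpha4]
  simp [sigma4]

noncomputable def threeTerms (p : ℕ) : ℝ :=
  (sigma4 (p + 1) : ℝ) / ((p : ℝ) * ((p : ℝ) + 1))
    + (sigma4 (p + 2) : ℝ) / ((p : ℝ) * ((p : ℝ) + 1) * ((p : ℝ) + 2))
    + (sigma4 (p + 3) : ℝ) / ((p : ℝ) * ((p : ℝ) + 1) * ((p : ℝ) + 2) * ((p : ℝ) + 3))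

theorem factorial_mul_sigma4_prime_div_factorial {m : ℕ} (hp : (m + 1).Prime) :
    (m ! : ℝ) * ((sigma4 (m + 1) : ℝ) / (m + 1)!) = ((m : ℝ) + 1) ^ 3 + 1 / ((m : ℝ) + 1) := by
  rw [sigma4_prime hp, factorial_succ]
  push_cast
  field_simp

theorem factorial_mul_sigma4_next_three_eq_threeTerms (m : ℕ) :
    (m ! : ℝ) * ((sigma4 (m + 2) : ℝ) / (m + 2)!) + m ! * ((sigma4 (m + 3) : ℝ) / (m + 3)!)
      + m ! * ((sigma4 (m + 4) : ℝ) / (m + 4)!) = threeTerms (m + 1) := by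
  simp only [threeTerms, factorial_succ]
  push_cast
  field_simp
  ring

theorem distToInt_threeTerms_le {C : ℝ} (hC : ∀ n, (sigma4 n : ℝ) ≤ C * n ^ 4) (hC0 : 0 ≤ C)
    {q : ℚ} (hq : alpha4 = q) {m : ℕ} (hp : (m + 1).Prime) (hden : q.den ≤ m) :
    distToInt (threeTerms (m + 1)) ≤ 1 / ((m : ℝ) + 1) + C * 4 ^ 4 / m := by
  set g : ℕ → ℝ := fun k => m ! * ((sigma4 (k + (m + 1)) : ℝ) / (k + (m + 1))!)
  obtain ⟨z, hz⟩ : ∃ z : ℤ, ∑' k, g k = z := by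
    refine exists_int_factorial_mul_tail_eq (a := fun n => (sigma4 n : ℤ)) ?_ ?_ hden <;>
      simp only [Int.cast_natCast]
    exacts [summable_sigma4_div_factorial, alpha4_eq_tsum ▸ hq]
  have hg : Summable g :=
    ((summable_nat_add_iff (m + 1)).2 summable_sigma4_div_factorial).mul_left _
  have hsplit := hg.sum_add_tsum_nat_add 4
  simp only [sum_range_succ, sum_range_zero, g] at hsplit
  rw [show 0 + (m + 1) = m + 1 by ring, show 1 + (m + 1) = m + 2 by ring,
    show 2 + (m + 1) = m + 3 by ring, show 3 + (m + 1) = m + 4 by ring] at hsplit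
  set R := ∑' k, (m ! : ℝ) * ((sigma4 (k + 4 + (m + 1)) : ℝ) / (k + 4 + (m + 1))!)
  have hR : R ≤ C * 4 ^ 4 / m := by
    simpa using tsum_factorial_mul_tail_le (a := fun n => (sigma4 n : ℝ)) (r := 4)
      (fun _ => by positivity) hC hC0 (by have := hp.two_le; omega)
  have hR0 : 0 ≤ R := tsum_nonneg fun _ => by positivity
  have hE : threeTerms (m + 1) = ((z - (m + 1) ^ 3 : ℤ) : ℝ) - (1 / ((m : ℝ) + 1) + R) := by
    rw [← factorial_mul_sigma4_next_three_eq_threeTerms]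
    push_cast
    linarith [factorial_mul_sigma4_prime_div_factorial hp]
  calc distToInt (threeTerms (m + 1))
      ≤ |threeTerms (m + 1) - ((z - (m + 1) ^ 3 : ℤ) : ℝ)| := round_le _ _
    _ = 1 / ((m : ℝ) + 1) + R := by
      rw [hE, sub_sub_cancel_left, abs_neg, abs_of_nonneg (by positivity)]
    _ ≤ 1 / ((m : ℝ) + 1) + C * 4 ^ 4 / m := by gcongr

theorem near_integrality_of_three_terms (hrat : ¬ Irrational alpha4) :
    ∃ K : ℝ, 0 < K ∧ ∃ x₀ : ℝ, ∀ x : ℝ, x₀ ≤ x →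
    ∀ p : ℕ, p.Prime → x / 2 < (p : ℝ) → (p : ℝ) ≤ x →
    distToInt ((sigma4 (p + 1) : ℝ) / ((p : ℝ) * ((p : ℝ) + 1))
        + (sigma4 (p + 2) : ℝ) / ((p : ℝ) * ((p : ℝ) + 1) * ((p : ℝ) + 2))
        + (sigma4 (p + 3) : ℝ) /
            ((p : ℝ) * ((p : ℝ) + 1) * ((p : ℝ) + 2) * ((p : ℝ) + 3)))
      ≤ K / x := by
  obtain ⟨q, hq⟩ : ∃ q : ℚ, alpha4 = q := by
    simpa [Irrational, eq_comm] using hrat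
  set C := ∑' d : ℕ, 1 / (d : ℝ) ^ 4
  have hC0 : 0 ≤ C := tsum_nonneg fun _ => by positivity
  refine ⟨2 + 4 * (C * 4 ^ 4), by positivity, 2 * q.den, fun x hx p hp hpx _ => ?_⟩
  obtain ⟨m, rfl⟩ : ∃ m, p = m + 1 := ⟨p - 1, by have := hp.pos; omega⟩
  push_cast at hpx
  have hm : (1 : ℝ) ≤ m := by exact_mod_cast (by have := hp.two_le; omega : 1 ≤ m)
  have hden : q.den ≤ m := by
    have : (q.den : ℝ) < m + 1 := by linarith
    exact Nat.lt_succ_iff.1 (by exact_mod_cast this)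
  have hx0 : 0 < x := by
    have : (1 : ℝ) ≤ q.den := by exact_mod_cast q.pos
    linarith
  have hp_inv : 1 / ((m : ℝ) + 1) ≤ 2 / x := by
    rw [div_le_div_iff₀ (by positivity) hx0]; linarith
  have hm_inv : 1 / (m : ℝ) ≤ 4 / x := by
    rw [div_le_div_iff₀ (by positivity) hx0]; linarith
  calc distToInt (threeTerms (m + 1))
      ≤ 1 / ((m : ℝ) + 1) + C * 4 ^ 4 * (1 / m) :=
        (distToInt_threeTerms_le sigma4_le_tsum_mul_pow hC0 hq hp hden).trans_eq (by ring)
    _ ≤ 2 / x + C * 4 ^ 4 * (4 / x) := by gcongr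
    _ = (2 + 4 * (C * 4 ^ 4)) / x := by ring
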